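/- On L_{n,r}, for any λ_0, λ_1 ∈ ℂ, the linear map f given by f(X_0) = λ_0 X_0, f(X_i) = ((i-1)λ_0 + λ_1) X_i for 1 ≤ i ≤ n-2, and f(X_{n-1}) = ((r-2)λ_0 + 2λ_1) X_{n-1} is a derivation of L_{n,r}. Hence L_{n,r} has rank at least 2. -/

import Mathlib

open Finset

/-- The `k`-th standard basis vector of `ℂⁿ` (zero if `k ≥ n`). -/
noncomputable def E (n k : ℕ) : Fin n → ℂ := fun t => if (t : ℕ) = k then 1 else 0

/-- The bilinear bracket on `ℂⁿ` determined by structure constants `s`, antisymmetrized: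
`[e_i, e_j] = s i j - s j i`. -/
noncomputable def brkt (n : ℕ) (s : ℕ → ℕ → Fin n → ℂ) (x y : Fin n → ℂ) : Fin n → ℂ :=
  ∑ i : Fin n, ∑ j : Fin n, (x i * y j) • (s (i : ℕ) (j : ℕ) - s (j : ℕ) (i : ℕ))

/-- Structure constants of `L_{n,r}`: `[X₀, Xᵢ] = X_{i+1}` for `1 ≤ i ≤ n-3` and
`[Xᵢ, X_{r-i}] = (-1)^{i-1} X_{n-1}` for `1 ≤ i ≤ (r-1)/2`. -/
noncomputable def sLnr (n r : ℕ) : ℕ → ℕ → Fin n → ℂ := fun i j =>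
  (if i = 0 ∧ 1 ≤ j ∧ j ≤ n - 3 then E n (j + 1) else 0) +
  (if 1 ≤ i ∧ i ≤ (r - 1) / 2 ∧ j = r - i then ((-1 : ℂ) ^ (i - 1)) • E n (n - 1) else 0)

/-- The diagonal map `f(X₀)=λ₀X₀`, `f(Xᵢ)=((i-1)λ₀+λ₁)Xᵢ` for `1 ≤ i ≤ n-2`,
`f(X_{n-1}) = ((r-2)λ₀ + 2λ₁) X_{n-1}`. -/
noncomputable def dLnr (n r : ℕ) (l0 l1 : ℂ) (x : Fin n → ℂ) : Fin n → ℂ := fun t =>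
  (if (t : ℕ) = 0 then l0
   else if (t : ℕ) = n - 1 then ((r - 2 : ℕ) : ℂ) * l0 + 2 * l1
   else (((t : ℕ) - 1 : ℕ) : ℂ) * l0 + l1) * x t

/-!
With `X_0` of weight `λ₀` and `X_i` of weight `(i-1)λ₀ + λ₁` for `1 ≤ i ≤ n-2`, the bracket
`[X_0, X_i] = X_{i+1}` is homogeneous, and every pairing `[X_i, X_{r-i}]` has weight
`(r-2)λ₀ + 2λ₁`, which is the weight given to `X_{n-1}`. Multiplying coordinates by weights that
are additive on the structure constants is a derivation; two such diagonal maps commute, and the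
maps for `(λ₀, λ₁) = (1, 0), (0, 1)` are told apart by their eigenvalues on `X_0` and `X_1`.
-/

noncomputable def lnrWeight (n r : ℕ) (l0 l1 : ℂ) (t : Fin n) : ℂ :=
  if (t : ℕ) = 0 then l0
  else if (t : ℕ) = n - 1 then ((r - 2 : ℕ) : ℂ) * l0 + 2 * l1
  else (((t : ℕ) - 1 : ℕ) : ℂ) * l0 + l1

def IsGradedBy {n : ℕ} (s : ℕ → ℕ → Fin n → ℂ) (w : Fin n → ℂ) : Prop :=
  ∀ i j t : Fin n, s i j t ≠ 0 → w t = w i + w j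

section Grading

variable {n : ℕ} {s s' : ℕ → ℕ → Fin n → ℂ} {w : Fin n → ℂ}

lemma IsGradedBy.add (hs : IsGradedBy s w) (hs' : IsGradedBy s' w) :
    IsGradedBy (fun i j => s i j + s' i j) w := by
  intro i j t h
  by_cases hst : s i j t = 0
  · exact hs' i j t fun h' => h (by simp [hst, h'])
  · exact hs i j t hst

lemma IsGradedBy.sub_mul_eq_zero (hs : IsGradedBy s w) (i j t : Fin n) :
    (w t - w i - w j) * s i j t = 0 := by
  by_cases h : s i j t = 0
  · rw [h, mul_zero]
  · rw [hs i j t h]; ring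

theorem IsGradedBy.mul_brkt (hs : IsGradedBy s w) (x y : Fin n → ℂ) :
    w * brkt n s x y = brkt n s (w * x) y + brkt n s x (w * y) := by
  funext t
  simp only [brkt, Pi.mul_apply, Pi.add_apply, Finset.sum_apply, Pi.smul_apply, smul_eq_mul,
    Pi.sub_apply, Finset.mul_sum, ← Finset.sum_add_distrib]
  refine Finset.sum_congr rfl fun i _ => Finset.sum_congr rfl fun j _ => ?_
  linear_combination (x i * y j) * hs.sub_mul_eq_zero i j t
    - (x i * y j) * hs.sub_mul_eq_zero j i t

end Grading

section Lnr

variable {n r : ℕ} {l0 l1 : ℂ}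

lemma dLnr_eq_mul (x : Fin n → ℂ) :
    dLnr n r l0 l1 x = lnrWeight n r l0 l1 * x := rfl

lemma lnrWeight_of_eq_zero {t : Fin n} (ht : (t : ℕ) = 0) : lnrWeight n r l0 l1 t = l0 := by
  simp [lnrWeight, ht]

lemma lnrWeight_of_eq_last {t : Fin n} (ht : (t : ℕ) = n - 1) (ht0 : (t : ℕ) ≠ 0) :
    lnrWeight n r l0 l1 t = ((r - 2 : ℕ) : ℂ) * l0 + 2 * l1 := by
  rw [lnrWeight, if_neg ht0, if_pos ht]

lemma lnrWeight_of_middle {t : Fin n} (ht0 : (t : ℕ) ≠ 0) (ht : (t : ℕ) ≠ n - 1) :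
    lnrWeight n r l0 l1 t = (((t : ℕ) - 1 : ℕ) : ℂ) * l0 + l1 := by
  simp [lnrWeight, ht0, ht]

lemma E_apply_ne_zero {k : ℕ} {t : Fin n} (h : E n k t ≠ 0) : (t : ℕ) = k := by
  by_contra hk
  exact h (by simp [E, hk])

lemma isGradedBy_lnrWeight_chain :
    IsGradedBy (n := n)
      (fun i j => if i = 0 ∧ 1 ≤ j ∧ j ≤ n - 3 then E n (j + 1) else 0)
      (lnrWeight n r l0 l1) := by
  intro i j t h
  dsimp only at h
  split_ifs at h with hij
  · obtain ⟨hi, hj1, hj⟩ := hij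
    have ht := E_apply_ne_zero h
    have hjt : ((t : ℕ) - 1 : ℕ) = ((j : ℕ) - 1 : ℕ) + 1 := by omega
    rw [lnrWeight_of_middle (by omega) (by omega), lnrWeight_of_eq_zero hi,
      lnrWeight_of_middle (by omega) (by omega), hjt]
    push_cast
    ring
  · exact absurd rfl h

lemma isGradedBy_lnrWeight_pairing (hr : r < n) :
    IsGradedBy (n := n)
      (fun i j => if 1 ≤ i ∧ i ≤ (r - 1) / 2 ∧ j = r - i then
        ((-1 : ℂ) ^ (i - 1)) • E n (n - 1) else 0)
      (lnrWeight n r l0 l1) := by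
  intro i j t h
  dsimp only at h
  split_ifs at h with hij
  · obtain ⟨hi1, hi, hj⟩ := hij
    rw [Pi.smul_apply, smul_eq_mul] at h
    have ht := E_apply_ne_zero (right_ne_zero_of_mul h)
    have hsum : ((i : ℕ) - 1) + ((j : ℕ) - 1) = r - 2 := by omega
    rw [lnrWeight_of_eq_last ht (by omega), lnrWeight_of_middle (by omega) (by omega),
      lnrWeight_of_middle (by omega) (by omega), ← hsum, Nat.cast_add]
    ring
  · exact absurd rfl h

lemma isGradedBy_sLnr (hr : r < n) : IsGradedBy (sLnr n r) (lnrWeight n r l0 l1) :=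
  IsGradedBy.add isGradedBy_lnrWeight_chain (isGradedBy_lnrWeight_pairing hr)

lemma dLnr_comp_comm (a b c d : ℂ) :
    dLnr n r a b ∘ dLnr n r c d = dLnr n r c d ∘ dLnr n r a b := by
  funext x
  simp only [Function.comp_apply, dLnr_eq_mul, mul_left_comm]

lemma dLnr_E_apply_self (t : Fin n) :
    dLnr n r l0 l1 (E n t) t = lnrWeight n r l0 l1 t := by
  simp [dLnr_eq_mul, E]

lemma linearIndependent_dLnr (hn : 3 ≤ n) :
    LinearIndependent ℂ ![dLnr n r 1 0, dLnr n r 0 1] := by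
  rw [LinearIndependent.pair_iff]
  intro a b hab
  let t0 : Fin n := ⟨0, by omega⟩
  let t1 : Fin n := ⟨1, by omega⟩
  have h0 := congrFun (congrFun hab (E n t0)) t0
  have h1 := congrFun (congrFun hab (E n t1)) t1
  simp only [Pi.add_apply, Pi.smul_apply, smul_eq_mul, Pi.zero_apply, dLnr_E_apply_self] at h0 h1
  rw [lnrWeight_of_eq_zero rfl, lnrWeight_of_eq_zero rfl] at h0
  have ht1 : (t1 : ℕ) ≠ n - 1 := show 1 ≠ n - 1 by omega
  rw [lnrWeight_of_middle one_ne_zero ht1, lnrWeight_of_middle one_ne_zero ht1] at h1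
  simp only [t1, Nat.sub_self, Nat.cast_zero, mul_one, mul_zero, add_zero, zero_add] at h0 h1
  exact ⟨h0, h1⟩

end Lnr

theorem stmt_10_general (n r : ℕ) (hn : 5 ≤ n)
    (hrn : r ≤ 2 * ((n - 1) / 2) - 1) :
    (∀ l0 l1 : ℂ, ∀ x y : Fin n → ℂ,
        dLnr n r l0 l1 (brkt n (sLnr n r) x y)
          = brkt n (sLnr n r) (dLnr n r l0 l1 x) y + brkt n (sLnr n r) x (dLnr n r l0 l1 y)) ∧
    (dLnr n r 1 0 ∘ dLnr n r 0 1 = dLnr n r 0 1 ∘ dLnr n r 1 0) ∧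
    LinearIndependent ℂ ![dLnr n r 1 0, dLnr n r 0 1] := by
  have hr : r < n := by omega
  refine ⟨fun l0 l1 x y => ?_, dLnr_comp_comm 1 0 0 1, linearIndependent_dLnr (by omega)⟩
  simpa only [dLnr_eq_mul] using (isGradedBy_sLnr (l0 := l0) (l1 := l1) hr).mul_brkt x y

/-- on `L_{n,r}`, `dLnr n r λ₀ λ₁` is a derivation for all `λ₀, λ₁`; the two
derivations with `(λ₀,λ₁) = (1,0), (0,1)` commute and are linearly independent, so
`L_{n,r}` has rank at least 2. -/
theorem stmt_10 (n r : ℕ) (hn : 5 ≤ n) (hr : Odd r) (hr3 : 3 ≤ r)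
    (hrn : r ≤ 2 * ((n - 1) / 2) - 1) :
    (∀ l0 l1 : ℂ, ∀ x y : Fin n → ℂ,
        dLnr n r l0 l1 (brkt n (sLnr n r) x y)
          = brkt n (sLnr n r) (dLnr n r l0 l1 x) y + brkt n (sLnr n r) x (dLnr n r l0 l1 y)) ∧
    (dLnr n r 1 0 ∘ dLnr n r 0 1 = dLnr n r 0 1 ∘ dLnr n r 1 0) ∧
    LinearIndependent ℂ ![dLnr n r 1 0, dLnr n r 0 1] :=
  stmt_10_general n r hn hrn
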